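/- For every integer m ≥ 1, the number of distinct patterns of radius m occurring in trivalent trees, i.e. Λ(Z, m) = card{B_S(m) : S ∈ Z}, equals 4 · 3^{3(2^{m−1} − 1)}. Equivalently, exactly 4 · 3^{3(2^{m−1} − 1)} closed d_2-balls of radius e^{−m} are needed to cover Z. -/

import Mathlib

open Filter
open scoped ENNReal

noncomputable section

namespace GraphTrees

/-- The word length of an element of a free group: the length of its reduced word. -/
def wlen {n : ℕ} (g : FreeGroup (Fin n)) : ℕ := (FreeGroup.toWord g).length

/-- `h` is a prefix of `g`. -/
def IsPref {n : ℕ} (h g : FreeGroup (Fin n)) : Prop :=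
  wlen h + wlen (h⁻¹ * g) = wlen g

/-- Vertex sets of infinite connected subtrees of the Cayley graph of the free group on
`n` generators which contain the identity: subsets containing `1`, infinite, and
prefix-closed. -/
def IsTree {n : ℕ} (S : Set (FreeGroup (Fin n))) : Prop :=
  1 ∈ S ∧ S.Infinite ∧ ∀ g ∈ S, ∀ h : FreeGroup (Fin n), IsPref h g → h ∈ S

/-- The space `X n` of pointed trees. -/
def X (n : ℕ) : Type := {S : Set (FreeGroup (Fin n)) // IsTree S}

variable {n : ℕ}

/-- The pattern `B_S(m)` of radius `m` of a pointed tree. -/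
def ball (S : X n) (m : ℕ) : Set (FreeGroup (Fin n)) := {g ∈ S.1 | wlen g ≤ m}

/-- The set of radii on which two pointed trees have the same pattern. -/
def agreeSet (S S' : X n) : Set ℕ := {m | ball S m = ball S' m}

/-- The ball metric on the space of pointed trees. -/
def tdist (S S' : X n) : ℝ :=
  letI := Classical.propDecidable (S = S')
  if S = S' then 0 else Real.exp (-((sSup (agreeSet S S') : ℕ) : ℝ))

theorem tdist_eq_of_ne {x y : X n} (h : x ≠ y) :
    tdist x y = Real.exp (-((sSup (agreeSet x y) : ℕ) : ℝ)) := by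
  unfold tdist
  rw [if_neg h]

theorem ball_mono_eq {x y : X n} {k m : ℕ} (hkm : k ≤ m)
    (h : ball x m = ball y m) : ball x k = ball y k := by
  ext g
  constructor
  · rintro ⟨hg, hlen⟩
    have hx : g ∈ ball x m := ⟨hg, hlen.trans hkm⟩
    rw [h] at hx
    exact ⟨hx.1, hlen⟩
  · rintro ⟨hg, hlen⟩
    have hy : g ∈ ball y m := ⟨hg, hlen.trans hkm⟩
    rw [← h] at hy
    exact ⟨hy.1, hlen⟩

theorem eq_of_agree_all {x y : X n} (h : ∀ m, ball x m = ball y m) : x = y := by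
  apply Subtype.ext
  ext g
  constructor
  · intro hg
    have hx : g ∈ ball x (wlen g) := ⟨hg, le_rfl⟩
    rw [h] at hx
    exact hx.1
  · intro hg
    have hy : g ∈ ball y (wlen g) := ⟨hg, le_rfl⟩
    rw [← h] at hy
    exact hy.1

theorem bddAbove_agreeSet {x y : X n} (h : x ≠ y) : BddAbove (agreeSet x y) := by
  by_contra hb
  refine h (eq_of_agree_all fun m => ?_)
  rcases not_bddAbove_iff.mp hb m with ⟨k, hk, hmk⟩
  exact ball_mono_eq hmk.le hk

theorem ball_zero (x : X n) : ball x 0 = {1} := by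
  ext g
  simp only [ball, Set.mem_setOf_eq, Nat.le_zero, Set.mem_singleton_iff]
  constructor
  · rintro ⟨hg, hlen⟩
    exact FreeGroup.toWord_eq_nil_iff.mp (List.length_eq_zero_iff.mp hlen)
  · rintro rfl
    exact ⟨x.2.1, by simp [wlen]⟩

theorem zero_mem_agreeSet (x y : X n) : (0 : ℕ) ∈ agreeSet x y := by
  show ball x 0 = ball y 0
  rw [ball_zero, ball_zero]

theorem tdist_nonneg (x y : X n) : 0 ≤ tdist x y := by
  rcases eq_or_ne x y with rfl | h
  · unfold tdist
    rw [if_pos rfl]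
  · rw [tdist_eq_of_ne h]
    exact (Real.exp_pos _).le

theorem tdist_self (x : X n) : tdist x x = 0 := by
  unfold tdist
  rw [if_pos rfl]

theorem tdist_comm (x y : X n) : tdist x y = tdist y x := by
  by_cases h : x = y
  · subst h; rfl
  · have hs : agreeSet x y = agreeSet y x := by
      ext m
      exact eq_comm
    rw [tdist_eq_of_ne h, tdist_eq_of_ne (Ne.symm h), hs]

theorem tdist_ultra (x y z : X n) : tdist x z ≤ max (tdist x y) (tdist y z) := by
  rcases eq_or_ne x z with rfl | hxz
  · exact le_max_of_le_left (by rw [tdist_self]; exact tdist_nonneg x y)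
  rcases eq_or_ne x y with rfl | hxy
  · exact le_max_of_le_right le_rfl
  rcases eq_or_ne y z with rfl | hyz
  · exact le_max_of_le_left le_rfl
  have hbxy := bddAbove_agreeSet hxy
  have hbyz := bddAbove_agreeSet hyz
  have hbxz := bddAbove_agreeSet hxz
  have hma : sSup (agreeSet x y) ∈ agreeSet x y :=
    Nat.sSup_mem ⟨0, zero_mem_agreeSet x y⟩ hbxy
  have hmb : sSup (agreeSet y z) ∈ agreeSet y z :=
    Nat.sSup_mem ⟨0, zero_mem_agreeSet y z⟩ hbyz
  have hmin : min (sSup (agreeSet x y)) (sSup (agreeSet y z)) ∈ agreeSet x z := by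
    have h1 : ball x (min (sSup (agreeSet x y)) (sSup (agreeSet y z)))
        = ball y (min (sSup (agreeSet x y)) (sSup (agreeSet y z))) :=
      ball_mono_eq (min_le_left _ _) hma
    have h2 : ball y (min (sSup (agreeSet x y)) (sSup (agreeSet y z)))
        = ball z (min (sSup (agreeSet x y)) (sSup (agreeSet y z))) :=
      ball_mono_eq (min_le_right _ _) hmb
    exact h1.trans h2
  have hle : min (sSup (agreeSet x y)) (sSup (agreeSet y z)) ≤ sSup (agreeSet x z) :=
    le_csSup hbxz hmin
  rw [tdist_eq_of_ne hxz, tdist_eq_of_ne hxy, tdist_eq_of_ne hyz]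
  rcases le_total (sSup (agreeSet x y)) (sSup (agreeSet y z)) with hab | hab
  · refine le_max_of_le_left (Real.exp_le_exp.mpr ?_)
    have h2 : ((sSup (agreeSet x y) : ℕ) : ℝ) ≤ ((sSup (agreeSet x z) : ℕ) : ℝ) := by
      exact_mod_cast (min_eq_left hab) ▸ hle
    linarith
  · refine le_max_of_le_right (Real.exp_le_exp.mpr ?_)
    have h2 : ((sSup (agreeSet y z) : ℕ) : ℝ) ≤ ((sSup (agreeSet x z) : ℕ) : ℝ) := by
      exact_mod_cast (min_eq_right hab) ▸ hle
    linarith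

theorem tdist_triangle (x y z : X n) : tdist x z ≤ tdist x y + tdist y z :=
  (tdist_ultra x y z).trans
    (max_le (le_add_of_nonneg_right (tdist_nonneg y z))
      (le_add_of_nonneg_left (tdist_nonneg x y)))

instance : MetricSpace (X n) where
  dist := tdist
  dist_self := tdist_self
  dist_comm := tdist_comm
  dist_triangle := tdist_triangle
  eq_of_dist_eq_zero := by
    intro x y h
    by_contra hne
    have h' : tdist x y = 0 := h
    rw [tdist_eq_of_ne hne] at h'
    exact (Real.exp_pos _).ne' h'

theorem dist_eq_tdist (x y : X n) : dist x y = tdist x y := rfl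

/-- The translate `S · g` of a tree `S` by a vertex `g ∈ S`. -/
def translate {n : ℕ} (S : Set (FreeGroup (Fin n))) (g : FreeGroup (Fin n)) :
    Set (FreeGroup (Fin n)) := (fun h => g⁻¹ * h) '' S

/-- The orbit `O(S) = {S · g : g ∈ S}` of a pointed tree under the pseudogroup action. -/
def orbit (S : X n) : Set (X n) := {S' | ∃ g ∈ S.1, S'.1 = translate S.1 g}

/-- A subset `Y ⊆ X n` is invariant under the pseudogroup action. -/
def Invariant (Y : Set (X n)) : Prop :=
  ∀ S ∈ Y, ∀ g ∈ S.1, ∀ S' : X n, S'.1 = translate S.1 g → S' ∈ Y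

/-- `Λ(Z, m)`: the number of distinct patterns of radius `m` of trees in `Z`. -/
def Lam (Z : Set (X n)) (m : ℕ) : ℕ := ((fun S => ball S m) '' Z).ncard

/-- The lower box dimension of a subset of the space of pointed trees. -/
def lowerBox (Z : Set (X n)) : ℝ≥0∞ :=
  Filter.liminf (fun m : ℕ => ENNReal.ofReal (Real.log (Lam Z m)) / (m : ℝ≥0∞)) Filter.atTop

/-- The upper box dimension of a subset of the space of pointed trees. -/
def upperBox (Z : Set (X n)) : ℝ≥0∞ :=
  Filter.limsup (fun m : ℕ => ENNReal.ofReal (Real.log (Lam Z m)) / (m : ℝ≥0∞)) Filter.atTop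


/-- The set of trivalent trees in `X 2`: every vertex has exactly three neighbours. -/
def Ztri : Set (X 2) :=
  {S | ∀ g ∈ S.1, ({h ∈ S.1 | wlen (g⁻¹ * h) = 1} : Set (FreeGroup (Fin 2))).encard = 3}

/-!
A vertex of a pointed tree is read as its reduced word, so a tree becomes a prefix-closed set of
reduced words, and trivalence says that the root has three children and every other vertex two.
Of the letters that keep a word reduced (four at the root, three elsewhere) exactly one is then
missing among the children. Hence the radius-`m` patterns of trivalent trees are the
prefix-closed sets of reduced words of length `≤ m` with this branching below level `m`; any
such set is realized by continuing it without ever repeating a letter. A pattern of radius `m`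
has `3 * 2 ^ (m - 1)` words of length `m`, and each of them may omit any one of its three
letters, so it extends to `3 ^ (3 * 2 ^ (m - 1))` patterns of radius `m + 1`; starting from the
four patterns of radius `1` this gives `4 * 3 ^ (3 * (2 ^ (m - 1) - 1))`.
-/

lemma ncard_eq_mul_of_ncard_fiber {α β : Type*} {s : Set α} {t : Set β} (hs : s.Finite)
    (ht : t.Finite) (f : α → β) (hf : Set.MapsTo f s t) {c : ℕ}
    (hc : ∀ b ∈ t, {a ∈ s | f a = b}.ncard = c) : s.ncard = t.ncard * c := by
  classical
  lift s to Finset α using hs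
  lift t to Finset β using ht
  rw [Set.ncard_coe_finset, Set.ncard_coe_finset, Finset.card_eq_sum_card_fiberwise hf,
    Finset.sum_const_nat fun b hb => ?_]
  rw [← hc b hb, ← Set.ncard_coe_finset, Finset.coe_filter]
  rfl

section PrefixTrees

variable {α : Type*}

def children (L : Set (List α)) (w : List α) : Set α := {x | w ++ [x] ∈ L}

def PrefixClosed (L : Set (List α)) : Prop := ∀ w ∈ L, ∀ u, u <+: w → u ∈ L

def trunc (m : ℕ) (L : Set (List α)) : Set (List α) := {w ∈ L | w.length ≤ m}

def level (L : Set (List α)) (k : ℕ) : Set (List α) := {w ∈ L | w.length = k}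

def neighbors (L : Set (List α)) (v : List α) : Set (List α) :=
  {w ∈ L | ∃ x, w = v ++ [x] ∨ v = w ++ [x]}

variable {L : Set (List α)}

lemma children_trunc {m : ℕ} {w : List α} (hw : w.length < m) :
    children (trunc m L) w = children L w := by
  ext x
  simp only [children, trunc, Set.mem_ofPred_eq, List.length_append, List.length_singleton,
    and_iff_left_iff_imp]
  intro; omega

lemma PrefixClosed.trunc (hL : PrefixClosed L) (m : ℕ) : PrefixClosed (trunc m L) :=
  fun _ hw u hu => ⟨hL _ hw.1 u hu, hu.length_le.trans hw.2⟩

lemma PrefixClosed.mem_level_succ_iff (hL : PrefixClosed L) {k : ℕ} {v : List α} :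
    v ∈ level L (k + 1) ↔ ∃ w ∈ level L k, ∃ x ∈ children L w, v = w ++ [x] := by
  constructor
  · rintro ⟨hv, hlen⟩
    obtain rfl | ⟨w, x, rfl⟩ := List.eq_nil_or_concat' v
    · simp at hlen
    exact ⟨w, ⟨hL _ hv w (List.prefix_append _ _), by simpa using hlen⟩, x, hv, rfl⟩
  · rintro ⟨w, ⟨-, hw⟩, x, hx, rfl⟩
    exact ⟨hx, by simp [hw]⟩

lemma PrefixClosed.encard_neighbors (hL : PrefixClosed L) {v : List α} (hv : v ∈ L) :
    (neighbors L v).encard = (children L v).encard + if v = [] then 0 else 1 := by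
  have hsplit :
      neighbors L v = (v ++ [·]) '' children L v ∪ {w ∈ L | ∃ x, v = w ++ [x]} := by
    ext w
    simp only [neighbors, children, Set.mem_union, Set.mem_image, Set.mem_ofPred_eq]
    constructor
    · rintro ⟨hw, x, rfl | rfl⟩
      exacts [Or.inl ⟨x, hw, rfl⟩, Or.inr ⟨hw, x, rfl⟩]
    · rintro (⟨x, hx, rfl⟩ | ⟨hw, x, rfl⟩)
      exacts [⟨hx, x, Or.inl rfl⟩, ⟨hw, x, Or.inr rfl⟩]
  have hdisj : Disjoint ((v ++ [·]) '' children L v) {w ∈ L | ∃ x, v = w ++ [x]} := by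
    rw [Set.disjoint_left]
    rintro _ ⟨x, -, rfl⟩ ⟨-, y, hy⟩
    simpa using congrArg List.length hy
  have hparent : {w ∈ L | ∃ x, v = w ++ [x]}.encard = if v = [] then 0 else 1 := by
    rcases List.eq_nil_or_concat' v with rfl | ⟨u, y, rfl⟩
    · simp
    · rw [if_neg (by simp), Set.encard_eq_one]
      refine ⟨u, Set.ext fun w => ⟨?_, ?_⟩⟩
      · rintro ⟨-, x, hx⟩
        exact (List.append_inj hx.symm (by simpa using (congrArg List.length hx).symm)).1
      · rintro rfl
        exact ⟨hL _ hv _ (List.prefix_append _ _), y, rfl⟩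
  have hinj : Function.Injective (v ++ [·]) := fun _ _ h => by simpa using h
  rw [hsplit, Set.encard_union_eq hdisj, hparent, hinj.injOn.encard_image]

lemma infinite_of_children_nonempty (h0 : [] ∈ L) (h : ∀ w ∈ L, (children L w).Nonempty) :
    L.Infinite := by
  have hlen : ∀ k, ∃ w ∈ L, w.length = k := by
    intro k
    induction k with
    | zero => exact ⟨[], h0, rfl⟩
    | succ k ih =>
      obtain ⟨w, hw, rfl⟩ := ih
      obtain ⟨x, hx⟩ := h w hw
      exact ⟨w ++ [x], hx, by simp⟩
  refine Set.Infinite.of_image List.length (Set.infinite_of_forall_exists_gt fun k => ?_)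
  obtain ⟨w, hw, hk⟩ := hlen (k + 1)
  exact ⟨k + 1, ⟨w, hw, hk⟩, k.lt_succ_self⟩

variable [Finite α]

lemma finite_level (L : Set (List α)) (k : ℕ) : (level L k).Finite :=
  (List.finite_length_eq α k).subset fun _ hw => hw.2

def levelFinset (L : Set (List α)) (k : ℕ) : Finset (List α) := (finite_level L k).toFinset

lemma mem_levelFinset {k : ℕ} {w : List α} : w ∈ levelFinset L k ↔ w ∈ level L k :=
  Set.Finite.mem_toFinset _

lemma length_of_mem_levelFinset {k : ℕ} (w : levelFinset L k) : w.1.length = k :=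
  (mem_levelFinset.mp w.2).2

end PrefixTrees

section FreeGroupWords

variable {α : Type*}

lemma isReduced_append_singleton {w : List (α × Bool)} {x : α × Bool} :
    FreeGroup.IsReduced (w ++ [x]) ↔
      FreeGroup.IsReduced w ∧ ∀ y ∈ w.getLast?, y.1 = x.1 → y.2 = x.2 := by
  simp [FreeGroup.IsReduced, List.isChain_append]

variable [DecidableEq α]

lemma toWord_mk_of_isReduced {L : List (α × Bool)} (h : FreeGroup.IsReduced L) :
    (FreeGroup.mk L).toWord = L := by
  rw [FreeGroup.toWord_mk, h.reduce_eq]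

lemma toWord_image_mk_image {C : Set (List (α × Bool))}
    (hC : ∀ w ∈ C, FreeGroup.IsReduced w) : FreeGroup.toWord '' (FreeGroup.mk '' C) = C := by
  rw [Set.image_image]
  exact (Set.image_congr fun w hw => toWord_mk_of_isReduced (hC w hw)).trans (Set.image_id C)

lemma inv_mul_eq_mk_of_toWord_eq_append {g h : FreeGroup α} {v : List (α × Bool)}
    (hv : g.toWord = h.toWord ++ v) : h⁻¹ * g = FreeGroup.mk v := by
  rw [← FreeGroup.mk_toWord (x := g), hv, ← FreeGroup.mul_mk, FreeGroup.mk_toWord,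
    inv_mul_cancel_left]

end FreeGroupWords

lemma wlen_inv (g : FreeGroup (Fin n)) : wlen g⁻¹ = wlen g := FreeGroup.norm_inv_eq

lemma wlen_mk_of_isReduced {w : List (Fin n × Bool)} (hw : FreeGroup.IsReduced w) :
    wlen (FreeGroup.mk w) = w.length := by
  rw [wlen, toWord_mk_of_isReduced hw]

lemma isPref_iff_prefix (h g : FreeGroup (Fin n)) : IsPref h g ↔ h.toWord <+: g.toWord := by
  constructor
  · intro hpre
    have hred : FreeGroup.Red (h.toWord ++ (h⁻¹ * g).toWord) g.toWord := by
      have : g.toWord = FreeGroup.reduce (h.toWord ++ (h⁻¹ * g).toWord) := by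
        rw [← FreeGroup.toWord_mul, mul_inv_cancel_left]
      exact this ▸ FreeGroup.reduce.red
    refine ⟨_, (hred.sublist.eq_of_length ?_).symm⟩
    rw [List.length_append]
    exact hpre.symm
  · rintro ⟨v, hv⟩
    have hvred : FreeGroup.IsReduced v :=
      FreeGroup.isReduced_toWord.infix (by rw [← hv]; exact (List.suffix_append _ _).isInfix)
    rw [IsPref, inv_mul_eq_mk_of_toWord_eq_append hv.symm, wlen_mk_of_isReduced hvred, wlen,
      wlen, ← hv, List.length_append]

lemma wlen_inv_mul_eq_one_iff (g h : FreeGroup (Fin n)) : wlen (g⁻¹ * h) = 1 ↔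
    ∃ x, h.toWord = g.toWord ++ [x] ∨ g.toWord = h.toWord ++ [x] := by
  constructor
  · intro hk
    obtain ⟨x, hx⟩ := List.length_eq_one_iff.mp hk
    have hh : h = FreeGroup.mk (g.toWord ++ [x]) := by
      rw [← FreeGroup.mul_mk, FreeGroup.mk_toWord, ← hx, FreeGroup.mk_toWord,
        mul_inv_cancel_left]
    -- either `h` is a child of `g`, or `x` cancels the last letter of `g` and `h` is its parent
    by_cases hred : FreeGroup.IsReduced (g.toWord ++ [x])
    · exact ⟨x, Or.inl (hh ▸ toWord_mk_of_isReduced hred)⟩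
    obtain ⟨u, y, hu, hyx⟩ : ∃ u y, g.toWord = u ++ [y] ∧ y = (x.1, !x.2) := by
      rw [isReduced_append_singleton] at hred
      push Not at hred
      obtain ⟨y, hy, hy1, hy2⟩ := hred FreeGroup.isReduced_toWord
      obtain ⟨u, hu⟩ := List.getLast?_eq_some_iff.mp hy
      exact ⟨u, y, hu, Prod.ext hy1 (Bool.eq_not_iff.mpr hy2)⟩
    have hcancel : FreeGroup.mk (u ++ [y] ++ [x]) = FreeGroup.mk u := by
      refine FreeGroup.Red.exact.mpr ⟨u, .single ?_, FreeGroup.Red.refl⟩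
      simpa [hyx] using FreeGroup.Red.Step.not_rev (L₁ := u) (L₂ := []) (x := x.1) (b := x.2)
    have hured : FreeGroup.IsReduced u :=
      FreeGroup.isReduced_toWord.infix (by rw [hu]; exact (List.prefix_append _ _).isInfix)
    refine ⟨y, Or.inr ?_⟩
    rw [hh, hu, hcancel, toWord_mk_of_isReduced hured]
  · rintro ⟨x, hx | hx⟩
    · rw [inv_mul_eq_mk_of_toWord_eq_append hx]
      rfl
    · rw [← wlen_inv, mul_inv_rev, inv_inv, inv_mul_eq_mk_of_toWord_eq_append hx]
      rfl

def words (S : X n) : Set (List (Fin n × Bool)) := FreeGroup.toWord '' S.1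

lemma nil_mem_words (S : X n) : [] ∈ words S := ⟨1, S.2.1, FreeGroup.toWord_one⟩

lemma isReduced_of_mem_words {S : X n} {w : List (Fin n × Bool)} (hw : w ∈ words S) :
    FreeGroup.IsReduced w := by
  obtain ⟨g, -, rfl⟩ := hw
  exact FreeGroup.isReduced_toWord

lemma prefixClosed_words (S : X n) : PrefixClosed (words S) := by
  rintro _ ⟨g, hg, rfl⟩ u hu
  have hured : FreeGroup.IsReduced u := FreeGroup.isReduced_toWord.infix hu.isInfix
  refine ⟨FreeGroup.mk u, S.2.2.2 g hg _ ?_, toWord_mk_of_isReduced hured⟩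
  rwa [isPref_iff_prefix, toWord_mk_of_isReduced hured]

lemma toWord_image_ball (S : X n) (m : ℕ) :
    FreeGroup.toWord '' ball S m = trunc m (words S) := by
  ext w
  constructor
  · rintro ⟨g, ⟨hg, hlen⟩, rfl⟩
    exact ⟨⟨g, hg, rfl⟩, hlen⟩
  · rintro ⟨⟨g, hg, rfl⟩, hlen⟩
    exact ⟨g, ⟨hg, hlen⟩, rfl⟩

lemma encard_neighbors_eq (S : X n) {g : FreeGroup (Fin n)} (hg : g ∈ S.1) :
    {h ∈ S.1 | wlen (g⁻¹ * h) = 1}.encard =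
      (children (words S) g.toWord).encard + if g.toWord = [] then 0 else 1 := by
  have himage : FreeGroup.toWord '' {h ∈ S.1 | wlen (g⁻¹ * h) = 1} =
      neighbors (words S) g.toWord := by
    ext w
    constructor
    · rintro ⟨h, ⟨hh, hadj⟩, rfl⟩
      exact ⟨⟨h, hh, rfl⟩, (wlen_inv_mul_eq_one_iff g h).mp hadj⟩
    · rintro ⟨⟨h, hh, rfl⟩, hadj⟩
      exact ⟨h, ⟨hh, (wlen_inv_mul_eq_one_iff g h).mpr hadj⟩, rfl⟩
  rw [← FreeGroup.toWord_injective.injOn.encard_image, himage]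
  exact (prefixClosed_words S).encard_neighbors ⟨g, hg, rfl⟩

lemma isTree_mk_image {C : Set (List (Fin n × Bool))} (h0 : [] ∈ C)
    (hred : ∀ w ∈ C, FreeGroup.IsReduced w) (hpre : PrefixClosed C) (hinf : C.Infinite) :
    IsTree (FreeGroup.mk '' C) := by
  refine ⟨⟨[], h0, rfl⟩, hinf.image fun u hu v hv huv => ?_, ?_⟩
  · rw [← toWord_mk_of_isReduced (hred u hu), huv, toWord_mk_of_isReduced (hred v hv)]
  · rintro _ ⟨w, hw, rfl⟩ h hpref
    rw [isPref_iff_prefix, toWord_mk_of_isReduced (hred w hw)] at hpref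
    exact ⟨h.toWord, hpre w hw _ hpref, FreeGroup.mk_toWord⟩

section Trivalence

variable {α : Type*}

def IsTrivalentAt (L : Set (List α)) (w : List α) : Prop :=
  (children L w).encard = if w = [] then 3 else 2

lemma IsTrivalentAt.children_nonempty {L : Set (List α)} {w : List α}
    (h : IsTrivalentAt L w) : (children L w).Nonempty := by
  rw [← Set.encard_pos, h]
  split_ifs <;> decide

end Trivalence

lemma mem_Ztri_iff {S : X 2} : S ∈ Ztri ↔ ∀ w ∈ words S, IsTrivalentAt (words S) w := by
  have key : ∀ g ∈ S.1, {h ∈ S.1 | wlen (g⁻¹ * h) = 1}.encard = 3 ↔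
      IsTrivalentAt (words S) g.toWord := by
    intro g hg
    rw [encard_neighbors_eq S hg, IsTrivalentAt]
    split_ifs
    · rw [add_zero]
    · rw [show (3 : ℕ∞) = 2 + 1 from rfl]
      exact WithTop.add_right_inj WithTop.one_ne_top
  simp only [Ztri, words, Set.mem_ofPred_eq, Set.forall_mem_image]
  exact forall₂_congr key

section NextLetters

variable {α : Type*} [Fintype α]

open scoped Classical in
def nextLetters (w : List (α × Bool)) : Finset (α × Bool) :=
  {x | FreeGroup.IsReduced (w ++ [x])}

lemma mem_nextLetters {w : List (α × Bool)} {x : α × Bool} :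
    x ∈ nextLetters w ↔ FreeGroup.IsReduced (w ++ [x]) := by
  simp [nextLetters]

lemma children_subset_nextLetters {L : Set (List (α × Bool))}
    (hL : ∀ v ∈ L, FreeGroup.IsReduced v) (w : List (α × Bool)) :
    children L w ⊆ nextLetters w :=
  fun _ hx => mem_nextLetters.mpr (hL _ hx)

lemma nextLetters_append_singleton [DecidableEq α] {u : List (α × Bool)} {y : α × Bool}
    (hw : FreeGroup.IsReduced (u ++ [y])) :
    nextLetters (u ++ [y]) = Finset.univ.erase (y.1, !y.2) := by
  ext x
  rw [mem_nextLetters, isReduced_append_singleton, List.getLast?_concat]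
  simp only [hw, true_and, Option.mem_def, Option.some.injEq, Finset.mem_erase, Finset.mem_univ,
    and_true, ne_eq, Prod.ext_iff, not_and]
  grind

lemma card_nextLetters {w : List (Fin 2 × Bool)} (hw : FreeGroup.IsReduced w) :
    (nextLetters w).card = if w = [] then 4 else 3 := by
  rcases List.eq_nil_or_concat' w with rfl | ⟨u, y, rfl⟩
  · have : nextLetters ([] : List (Fin 2 × Bool)) = Finset.univ :=
      Finset.eq_univ_of_forall fun x => mem_nextLetters.mpr FreeGroup.IsReduced.singleton
    rw [this, if_pos rfl]
    rfl
  · rw [nextLetters_append_singleton hw, Finset.card_erase_of_mem (Finset.mem_univ _),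
      if_neg (by simp)]
    rfl

lemma IsTrivalentAt.exists_children_eq {L : Set (List (Fin 2 × Bool))}
    {w : List (Fin 2 × Bool)} (h : IsTrivalentAt L w) (hw : FreeGroup.IsReduced w)
    (hsub : children L w ⊆ nextLetters w) :
    ∃ a ∈ nextLetters w, children L w = ↑((nextLetters w).erase a) := by
  have hmissing : (↑(nextLetters w) \ children L w).encard = 1 := by
    have := Set.encard_sdiff_add_encard_of_subset hsub
    rw [Set.encard_coe_eq_coe_finsetCard, card_nextLetters hw, h] at this
    split_ifs at this
    · exact ENat.add_left_injective_of_ne_top (n := 3) (by decide) this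
    · exact ENat.add_left_injective_of_ne_top (n := 2) (by decide) this
  obtain ⟨a, ha⟩ := Set.encard_eq_one.mp hmissing
  refine ⟨a, (Set.singleton_subset_iff.mp ha.symm.subset).1, ?_⟩
  rw [Finset.coe_erase, ← ha, Set.sdiff_sdiff_cancel_left hsub]

lemma isTrivalentAt_of_children_eq {L : Set (List (Fin 2 × Bool))} {w : List (Fin 2 × Bool)}
    {a : Fin 2 × Bool} (hw : FreeGroup.IsReduced w) (ha : a ∈ nextLetters w)
    (h : children L w = ↑((nextLetters w).erase a)) : IsTrivalentAt L w := by
  rw [IsTrivalentAt, h, Set.encard_coe_eq_coe_finsetCard, Finset.card_erase_of_mem ha,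
    card_nextLetters hw]
  split_ifs <;> rfl

end NextLetters

section Patterns

variable {α : Type*}

structure IsTriPattern (m : ℕ) (L : Set (List (α × Bool))) : Prop where
  nil_mem : [] ∈ L
  isReduced : ∀ w ∈ L, FreeGroup.IsReduced w
  length_le : ∀ w ∈ L, w.length ≤ m
  prefixClosed : PrefixClosed L
  isTrivalentAt : ∀ w ∈ L, w.length < m → IsTrivalentAt L w

variable {m : ℕ} {L : Set (List (α × Bool))}

lemma isTriPattern_trunc (h0 : [] ∈ L) (hred : ∀ w ∈ L, FreeGroup.IsReduced w)
    (hpre : PrefixClosed L) (htri : ∀ w ∈ L, w.length < m → IsTrivalentAt L w) :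
    IsTriPattern m (trunc m L) where
  nil_mem := ⟨h0, Nat.zero_le m⟩
  isReduced w hw := hred w hw.1
  length_le w hw := hw.2
  prefixClosed := hpre.trunc m
  isTrivalentAt w hw hlt := by
    rw [IsTrivalentAt, children_trunc hlt]
    exact htri w hw.1 hlt

lemma IsTriPattern.trunc_succ (hL : IsTriPattern (m + 1) L) : IsTriPattern m (trunc m L) :=
  isTriPattern_trunc hL.nil_mem hL.isReduced hL.prefixClosed
    fun w hw hlt => hL.isTrivalentAt w hw (by omega)

lemma finite_setOf_isTriPattern [Finite α] (m : ℕ) :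
    {L : Set (List (α × Bool)) | IsTriPattern m L}.Finite :=
  (List.finite_length_le _ m).finite_subsets.subset fun _ hL => hL.length_le

/-- Beyond radius `m` a reduced word that never repeats a letter changes generator at every
step, so every vertex there keeps exactly two children. -/
def completion (m : ℕ) (L : Set (List (α × Bool))) : Set (List (α × Bool)) :=
  {w | FreeGroup.IsReduced w ∧ w.take m ∈ L ∧ (w.drop (m - 1)).IsChain (· ≠ ·)}

lemma mem_completion_of_mem (hL : IsTriPattern m L) {w : List (α × Bool)} (hw : w ∈ L) :
    w ∈ completion m L := by
  have hlen := hL.length_le w hw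
  refine ⟨hL.isReduced w hw, by rwa [List.take_of_length_le hlen], ?_⟩
  match w.drop (m - 1), (show (w.drop (m - 1)).length ≤ 1 by rw [List.length_drop]; omega) with
  | [], _ => exact List.IsChain.nil
  | [_], _ => exact List.isChain_singleton _

lemma mem_of_mem_completion {w : List (α × Bool)} (hw : w ∈ completion m L)
    (hlen : w.length ≤ m) : w ∈ L := by
  simpa [List.take_of_length_le hlen] using hw.2.1

lemma trunc_completion (hL : IsTriPattern m L) : trunc m (completion m L) = L :=
  Set.ext fun _ => ⟨fun hw => mem_of_mem_completion hw.1 hw.2,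
    fun hw => ⟨mem_completion_of_mem hL hw, hL.length_le _ hw⟩⟩

lemma prefixClosed_completion (hL : IsTriPattern m L) : PrefixClosed (completion m L) :=
  fun _ hw _ hu => ⟨hw.1.infix hu.isInfix, hL.prefixClosed _ hw.2.1 _ (hu.take m),
    hw.2.2.prefix (hu.drop (m - 1))⟩

lemma children_completion_of_lt (hL : IsTriPattern m L) {w : List (α × Bool)}
    (hw : w.length < m) : children (completion m L) w = children L w :=
  Set.ext fun _ => ⟨fun hx => mem_of_mem_completion hx (by simpa using hw),
    mem_completion_of_mem hL⟩

variable [Fintype α] [DecidableEq α]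

lemma children_completion_of_le (hm : 1 ≤ m) {w : List (α × Bool)} (hw : w ∈ completion m L)
    (hlen : m ≤ w.length) :
    ∃ y ∈ nextLetters w, children (completion m L) w = ↑((nextLetters w).erase y) := by
  obtain rfl | ⟨u, y, rfl⟩ := List.eq_nil_or_concat' w
  · rw [List.length_nil] at hlen
    omega
  have hu : m - 1 ≤ u.length := by
    rw [List.length_append, List.length_singleton] at hlen
    omega
  refine ⟨y, mem_nextLetters.mpr ?_, Set.ext fun x => ?_⟩
  · rw [isReduced_append_singleton, List.getLast?_concat]
    exact ⟨hw.1, by simp⟩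
  have htake : (u ++ [y] ++ [x]).take m = (u ++ [y]).take m :=
    List.take_append_of_le_length hlen
  have hdrop : (u ++ [y] ++ [x]).drop (m - 1) = (u ++ [y]).drop (m - 1) ++ [x] :=
    List.drop_append_of_le_length (hu.trans (by simp))
  have hlast : ((u ++ [y]).drop (m - 1)).getLast? = some y := by
    rw [List.drop_append_of_le_length hu, List.getLast?_concat]
  change _ ∧ _ ∧ _ ↔ x ∈ (nextLetters (u ++ [y])).erase y
  rw [Finset.mem_erase, mem_nextLetters, htake, hdrop, List.isChain_append, hlast]
  simp only [hw.2.1, hw.2.2, List.isChain_singleton, Option.mem_def, Option.some.injEq,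
    List.head?_cons, forall_eq', true_and]
  exact and_comm.trans (and_congr_left fun _ => ne_comm)

end Patterns

lemma isTrivalentAt_completion {m : ℕ} {L : Set (List (Fin 2 × Bool))} (hm : 1 ≤ m)
    (hL : IsTriPattern m L) {w : List (Fin 2 × Bool)} (hw : w ∈ completion m L) :
    IsTrivalentAt (completion m L) w := by
  rcases Nat.lt_or_ge w.length m with hlt | hge
  · rw [IsTrivalentAt, children_completion_of_lt hL hlt]
    exact hL.isTrivalentAt w (mem_of_mem_completion hw hlt.le) hlt
  · obtain ⟨y, hy, hchildren⟩ := children_completion_of_le hm hw hge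
    exact isTrivalentAt_of_children_eq hw.1 hy hchildren

lemma exists_mem_Ztri_trunc_words_eq {m : ℕ} {L : Set (List (Fin 2 × Bool))} (hm : 1 ≤ m)
    (hL : IsTriPattern m L) : ∃ S ∈ Ztri, trunc m (words S) = L := by
  have hred : ∀ w ∈ completion m L, FreeGroup.IsReduced w := fun _ hw => hw.1
  have h0 : [] ∈ completion m L := mem_completion_of_mem hL hL.nil_mem
  have htri := fun w (hw : w ∈ completion m L) => isTrivalentAt_completion hm hL hw
  have hinf : (completion m L).Infinite :=
    infinite_of_children_nonempty h0 fun w hw => (htri w hw).children_nonempty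
  let S : X 2 := ⟨_, isTree_mk_image h0 hred (prefixClosed_completion hL) hinf⟩
  have hS : words S = completion m L := toWord_image_mk_image hred
  refine ⟨S, mem_Ztri_iff.mpr ?_, ?_⟩
  · rw [hS]
    exact htri
  · rw [hS, trunc_completion hL]

lemma image_trunc_words_Ztri {m : ℕ} (hm : 1 ≤ m) :
    (fun S => trunc m (words S)) '' Ztri = {L | IsTriPattern m L} := by
  ext L
  constructor
  · rintro ⟨S, hS, rfl⟩
    exact isTriPattern_trunc (nil_mem_words S) (fun _ => isReduced_of_mem_words)
      (prefixClosed_words S) fun w hw _ => mem_Ztri_iff.mp hS w hw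
  · exact fun hL => exists_mem_Ztri_trunc_words_eq hm hL

lemma Lam_Ztri_eq_ncard {m : ℕ} (hm : 1 ≤ m) :
    Lam Ztri m = {L : Set (List (Fin 2 × Bool)) | IsTriPattern m L}.ncard := by
  rw [Lam, ← Set.ncard_image_of_injective _ (Set.image_injective.mpr FreeGroup.toWord_injective),
    Set.image_image]
  simp_rw [toWord_image_ball]
  rw [image_trunc_words_Ztri hm]

section Counting

variable {α : Type*}

lemma level_zero {L : Set (List α)} (h0 : [] ∈ L) : level L 0 = {[]} := by
  ext w
  simp only [level, List.length_eq_zero_iff, Set.mem_ofPred_eq, Set.mem_singleton_iff,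
    and_iff_right_iff_imp]
  rintro rfl
  exact h0

lemma setOf_isTriPattern_zero : {L : Set (List (α × Bool)) | IsTriPattern 0 L} = {{[]}} := by
  ext L
  refine ⟨fun hL => Set.eq_singleton_iff_unique_mem.mpr ⟨hL.nil_mem, fun w hw => ?_⟩, ?_⟩
  · exact List.eq_nil_of_length_eq_zero (Nat.le_zero.mp (hL.length_le w hw))
  · rintro rfl
    exact {
      nil_mem := rfl
      isReduced := by rintro _ rfl; exact FreeGroup.IsReduced.nil
      length_le := by rintro _ rfl; rfl
      prefixClosed := by rintro _ rfl u hu; exact List.prefix_nil.mp hu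
      isTrivalentAt := fun _ _ h => absurd h (Nat.not_lt_zero _) }

variable {m : ℕ} {L : Set (List (α × Bool))}

lemma IsTriPattern.ncard_level_succ [Finite α] (hL : IsTriPattern m L) {k : ℕ} (hk : k < m) :
    (level L (k + 1)).ncard = (level L k).ncard * if k = 0 then 3 else 2 := by
  refine ncard_eq_mul_of_ncard_fiber (finite_level L _) (finite_level L k) List.dropLast
    (fun v hv => ?_) fun w hw => ?_
  · obtain ⟨w, hw, x, -, rfl⟩ := hL.prefixClosed.mem_level_succ_iff.mp hv
    rwa [List.dropLast_concat]
  have hfiber : {v ∈ level L (k + 1) | v.dropLast = w} = (w ++ [·]) '' children L w := by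
    ext v
    rw [Set.mem_sep_iff, hL.prefixClosed.mem_level_succ_iff]
    constructor
    · rintro ⟨⟨w', -, x, hx, rfl⟩, hdrop⟩
      rw [List.dropLast_concat] at hdrop
      exact ⟨x, hdrop ▸ hx, by rw [hdrop]⟩
    · rintro ⟨x, hx, rfl⟩
      exact ⟨⟨w, hw, x, hx, rfl⟩, List.dropLast_concat⟩
  have hinj : Function.Injective (w ++ [·]) := fun _ _ h => by simpa using h
  have hnil : w = [] ↔ k = 0 := by rw [← hw.2, List.length_eq_zero_iff]
  rw [hfiber, Set.ncard_image_of_injective _ hinj, Set.ncard_def,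
    hL.isTrivalentAt w hw.1 (hw.2 ▸ hk)]
  simp only [hnil]
  split_ifs <;> rfl

lemma IsTriPattern.ncard_level [Finite α] (hL : IsTriPattern m L) {k : ℕ} (hk : 1 ≤ k)
    (hkm : k ≤ m) : (level L k).ncard = 3 * 2 ^ (k - 1) := by
  induction k, hk using Nat.le_induction with
  | base => rw [hL.ncard_level_succ hkm, level_zero hL.nil_mem, Set.ncard_singleton]; rfl
  | succ k hk ih =>
    rw [hL.ncard_level_succ hkm, ih (by omega), if_neg (by omega), Nat.add_sub_cancel,
      mul_assoc, ← pow_succ, Nat.sub_add_cancel hk]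

variable [Fintype α] [DecidableEq α] {P : Set (List (α × Bool))}
  {f : levelFinset P m → α × Bool}

def extendLevel (P : Set (List (α × Bool))) (m : ℕ) (f : levelFinset P m → α × Bool) :
    Set (List (α × Bool)) :=
  P ∪ ⋃ w : levelFinset P m, (w.1 ++ [·]) '' ↑((nextLetters w.1).erase (f w))

lemma mem_extendLevel {v : List (α × Bool)} : v ∈ extendLevel P m f ↔
    v ∈ P ∨ ∃ w : levelFinset P m, ∃ x ∈ (nextLetters w.1).erase (f w),
      v = w.1 ++ [x] := by
  simp only [extendLevel, Set.mem_union, Set.mem_iUnion, Set.mem_image, Finset.mem_coe]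
  exact or_congr_right <| exists_congr fun _ => exists_congr fun _ =>
    and_congr_right fun _ => eq_comm

lemma children_extendLevel_of_mem_levelFinset (hP : ∀ v ∈ P, v.length ≤ m)
    (w : levelFinset P m) :
    children (extendLevel P m f) w.1 = ↑((nextLetters w.1).erase (f w)) := by
  ext x
  refine ⟨fun hx => ?_, fun hx => mem_extendLevel.mpr (Or.inr ⟨w, x, hx, rfl⟩)⟩
  rcases mem_extendLevel.mp hx with hx | ⟨w', x', hx', heq⟩
  · have := hP _ hx
    simp [length_of_mem_levelFinset w] at this
  · obtain ⟨hw, hx⟩ := List.append_inj heq (by rw [length_of_mem_levelFinset,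
      length_of_mem_levelFinset])
    obtain rfl : w = w' := Subtype.ext hw
    rwa [List.singleton_inj.mp hx]

lemma children_extendLevel_of_lt {v : List (α × Bool)} (hv : v.length < m) :
    children (extendLevel P m f) v = children P v := by
  ext x
  refine ⟨fun hx => ?_, fun hx => mem_extendLevel.mpr (Or.inl hx)⟩
  rcases mem_extendLevel.mp hx with hx | ⟨w, x', -, heq⟩
  · exact hx
  · have := congrArg List.length heq
    simp only [List.length_append, List.length_singleton, length_of_mem_levelFinset w] at this
    omega

lemma trunc_extendLevel (hP : ∀ v ∈ P, v.length ≤ m) : trunc m (extendLevel P m f) = P := by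
  ext v
  refine ⟨fun ⟨hv, hlen⟩ => ?_, fun hv => ⟨mem_extendLevel.mpr (Or.inl hv), hP v hv⟩⟩
  rcases mem_extendLevel.mp hv with hv | ⟨w, x, -, rfl⟩
  · exact hv
  · simp [length_of_mem_levelFinset w] at hlen

lemma extendLevel_injOn (hP : ∀ v ∈ P, v.length ≤ m) :
    Set.InjOn (extendLevel P m) {f | ∀ w, f w ∈ nextLetters w.1} := by
  intro f hf g hg hfg
  funext w
  have h := children_extendLevel_of_mem_levelFinset (f := f) hP w
  rw [hfg, children_extendLevel_of_mem_levelFinset hP w] at h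
  by_contra hne
  have : g w ∈ (nextLetters w.1).erase (f w) := Finset.mem_erase.mpr ⟨Ne.symm hne, hg w⟩
  rw [← Finset.mem_coe, ← h] at this
  simp at this

end Counting

section CountingTrivalent

variable {m : ℕ} {P L : Set (List (Fin 2 × Bool))}

lemma isTriPattern_extendLevel (hP : IsTriPattern m P) {f : levelFinset P m → Fin 2 × Bool}
    (hf : ∀ w, f w ∈ nextLetters w.1) : IsTriPattern (m + 1) (extendLevel P m f) where
  nil_mem := mem_extendLevel.mpr (Or.inl hP.nil_mem)
  isReduced v hv := by
    rcases mem_extendLevel.mp hv with hvP | ⟨w, x, hx, rfl⟩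
    · exact hP.isReduced v hvP
    · exact mem_nextLetters.mp (Finset.mem_of_mem_erase hx)
  length_le v hv := by
    rcases mem_extendLevel.mp hv with hvP | ⟨w, x, -, rfl⟩
    · exact (hP.length_le v hvP).trans m.le_succ
    · simp [length_of_mem_levelFinset w]
  prefixClosed v hv u hu := by
    rcases mem_extendLevel.mp hv with hvP | ⟨w, x, -, rfl⟩
    · exact mem_extendLevel.mpr (Or.inl (hP.prefixClosed v hvP u hu))
    · rcases List.prefix_concat_iff.mp hu with rfl | hu
      · exact hv
      · exact mem_extendLevel.mpr (Or.inl (hP.prefixClosed _ (mem_levelFinset.mp w.2).1 u hu))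
  isTrivalentAt v hv hlt := by
    have hvP : v ∈ P := by
      rw [← trunc_extendLevel hP.length_le (f := f)]
      exact ⟨hv, by omega⟩
    rcases Nat.lt_or_ge v.length m with hinner | hleaf
    · rw [IsTrivalentAt, children_extendLevel_of_lt hinner]
      exact hP.isTrivalentAt v hvP hinner
    · let w : levelFinset P m := ⟨v, mem_levelFinset.mpr ⟨hvP, by omega⟩⟩
      exact isTrivalentAt_of_children_eq (hP.isReduced v hvP) (hf w)
        (children_extendLevel_of_mem_levelFinset hP.length_le w)

lemma IsTriPattern.exists_extendLevel_eq (hL : IsTriPattern (m + 1) L) :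
    ∃ f : levelFinset (trunc m L) m → Fin 2 × Bool,
      (∀ w, f w ∈ nextLetters w.1) ∧ extendLevel (trunc m L) m f = L := by
  have hex (w : levelFinset (trunc m L) m) :
      ∃ a ∈ nextLetters w.1, children L w.1 = ↑((nextLetters w.1).erase a) := by
    have hw := mem_levelFinset.mp w.2
    exact (hL.isTrivalentAt w.1 hw.1.1 (by rw [hw.2]; omega)).exists_children_eq
      (hL.isReduced _ hw.1.1) (children_subset_nextLetters hL.isReduced _)
  choose f hf hchildren using hex
  refine ⟨f, hf, Set.ext fun v => ⟨fun hv => ?_, fun hv => ?_⟩⟩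
  · rcases mem_extendLevel.mp hv with hv | ⟨w, x, hx, rfl⟩
    · exact hv.1
    · exact (Set.ext_iff.mp (hchildren w) x).mpr hx
  · rcases Nat.lt_or_ge v.length (m + 1) with hlt | hge
    · exact mem_extendLevel.mpr (Or.inl ⟨hv, by omega⟩)
    obtain ⟨w, hw, x, hx, rfl⟩ :=
      hL.prefixClosed.mem_level_succ_iff.mp ⟨hv, le_antisymm (hL.length_le v hv) hge⟩
    let w' : levelFinset (trunc m L) m :=
      ⟨w, mem_levelFinset.mpr ⟨⟨hw.1, hw.2.le⟩, hw.2⟩⟩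
    exact mem_extendLevel.mpr (Or.inr ⟨w', x, (Set.ext_iff.mp (hchildren w') x).mp hx, rfl⟩)

lemma IsTriPattern.ncard_extensions (hP : IsTriPattern m P) :
    {L | IsTriPattern (m + 1) L ∧ trunc m L = P}.ncard =
      ∏ w : levelFinset P m, (nextLetters w.1).card := by
  have himage : {L | IsTriPattern (m + 1) L ∧ trunc m L = P} =
      extendLevel P m '' {f | ∀ w, f w ∈ nextLetters w.1} := by
    ext L
    constructor
    · rintro ⟨hL, rfl⟩
      exact hL.exists_extendLevel_eq
    · rintro ⟨f, hf, rfl⟩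
      exact ⟨isTriPattern_extendLevel hP hf, trunc_extendLevel hP.length_le⟩
  have hpi : {f : levelFinset P m → Fin 2 × Bool | ∀ w, f w ∈ nextLetters w.1} =
      ↑(Fintype.piFinset fun w : levelFinset P m => nextLetters w.1) := by
    ext f
    simp
  rw [himage, (extendLevel_injOn hP.length_le).ncard_image, hpi, Set.ncard_coe_finset,
    Fintype.card_piFinset]

lemma ncard_setOf_isTriPattern_succ {c : ℕ}
    (hc : ∀ P : Set (List (Fin 2 × Bool)), IsTriPattern m P →
      ∏ w : levelFinset P m, (nextLetters w.1).card = c) :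
    {L : Set (List (Fin 2 × Bool)) | IsTriPattern (m + 1) L}.ncard =
      {P : Set (List (Fin 2 × Bool)) | IsTriPattern m P}.ncard * c :=
  ncard_eq_mul_of_ncard_fiber (finite_setOf_isTriPattern (α := Fin 2) _)
    (finite_setOf_isTriPattern m) (trunc m) (fun _ hL => hL.trunc_succ)
    fun P hP => hP.ncard_extensions.trans (hc P hP)

lemma IsTriPattern.prod_card_nextLetters_zero (hP : IsTriPattern 0 P) :
    ∏ w : levelFinset P 0, (nextLetters w.1).card = 4 := by
  have hroot : levelFinset P 0 = {[]} := by
    ext w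
    rw [mem_levelFinset, level_zero hP.nil_mem, Set.mem_singleton_iff, Finset.mem_singleton]
  rw [Finset.prod_coe_sort (levelFinset P 0) fun w => (nextLetters w).card, hroot,
    Finset.prod_singleton, card_nextLetters FreeGroup.IsReduced.nil, if_pos rfl]

lemma IsTriPattern.prod_card_nextLetters (hP : IsTriPattern m P) (hm : 1 ≤ m) :
    ∏ w : levelFinset P m, (nextLetters w.1).card = 3 ^ (3 * 2 ^ (m - 1)) := by
  have hleaf (w : levelFinset P m) : (nextLetters w.1).card = 3 := by
    rw [card_nextLetters (hP.isReduced _ (mem_levelFinset.mp w.2).1), if_neg]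
    intro hnil
    have := length_of_mem_levelFinset w
    rw [hnil, List.length_nil] at this
    omega
  rw [Finset.prod_congr rfl fun w _ => hleaf w, Finset.prod_const, Finset.card_univ,
    Fintype.card_coe, levelFinset, ← Set.ncard_eq_toFinset_card _ (finite_level P m),
    hP.ncard_level hm le_rfl]

theorem ncard_setOf_isTriPattern (hm : 1 ≤ m) :
    {L : Set (List (Fin 2 × Bool)) | IsTriPattern m L}.ncard =
      4 * 3 ^ (3 * (2 ^ (m - 1) - 1)) := by
  induction m, hm using Nat.le_induction with
  | base =>
    rw [ncard_setOf_isTriPattern_succ fun P hP => hP.prod_card_nextLetters_zero,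
      setOf_isTriPattern_zero, Set.ncard_singleton]
    rfl
  | succ m hm ih =>
    rw [ncard_setOf_isTriPattern_succ fun P hP => hP.prod_card_nextLetters hm, ih, mul_assoc,
      ← pow_add, Nat.add_sub_cancel]
    have hpow : 2 ^ m = 2 * 2 ^ (m - 1) := by rw [← pow_succ']; congr; omega
    have hpos : 1 ≤ 2 ^ (m - 1) := Nat.one_le_two_pow
    congr 2
    omega

end CountingTrivalent

/-- Exactly `4 * 3^(3 * (2^(m-1) - 1))` patterns of radius `m ≥ 1` occur among
trivalent trees, i.e. that many closed balls of radius `e^{-m}` are needed to cover `Z`. -/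
theorem Lam_trivalent (m : ℕ) (hm : 1 ≤ m) :
    Lam Ztri m = 4 * 3 ^ (3 * (2 ^ (m - 1) - 1)) := by
  rw [Lam_Ztri_eq_ncard hm, ncard_setOf_isTriPattern hm]

end GraphTrees
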